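/- arXiv:math/0006081 — 2 statements merged into one kernel-verified Lean document; each statement's English description precedes it below -/
import Mathlib

section
/- Let G be a topological group, let M be a universal minimal compact G-space, let p ∈ M, and let H = {g ∈ G : g·p = p} be the stabilizer of p. Then there exists a chain C (totally ordered by inclusion) of nonempty closed subsets of M which is maximal among all such chains and is H-invariant: for every F ∈ C and every g ∈ H, the image g·F belongs to C. -/
/-!
Let `K` be the hyperspace of nonempty closed subsets of `M` with the Vietoris topology (these are
the `NonemptyCompacts`, as `M` is compact Hausdorff). The
maximal chains form a closed `G`-invariant subset `Φ` of the compact Hausdorff space of nonempty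
closed subsets of `K`, so `Φ` is itself a compact `G`-space. By universality there is a `G`-map
`f : M → Φ`; since `g • p = p` gives `g • f p = f (g • p) = f p`, the maximal chain `f p` is
invariant under the stabilizer of `p`.

The closedness of `Φ` is the heart of the matter. A closed chain containing `M` that is not
maximal has a jump: points `x ≠ y` and a closed `F ∌ x, y` such that every member lies in `F` or
contains both `x` and `y`. Thickening `x` and `y` to neighbourhoods turns this into an open
condition on chains, and no maximal chain satisfies it, because one can insert a new member
into the jump.
-/

open Set Topology TopologicalSpace

section ChainTopology

variable {α : Type*} [TopologicalSpace α] [Preorder α]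

theorem IsChain.closure [OrderClosedTopology α] {s : Set α} (hs : IsChain (· ≤ ·) s) :
    IsChain (· ≤ ·) (_root_.closure s) := by
  have hR : IsClosed {p : α × α | p.1 ≤ p.2 ∨ p.2 ≤ p.1} :=
    (isClosed_le continuous_fst continuous_snd).union (isClosed_le continuous_snd continuous_fst)
  have hsub : _root_.closure (s ×ˢ s) ⊆ {p : α × α | p.1 ≤ p.2 ∨ p.2 ≤ p.1} :=
    hR.closure_subset_iff.mpr fun p hp => hs.total hp.1 hp.2
  intro a ha b hb _
  exact hsub (closure_prod_eq (s := s) (t := s) ▸ mk_mem_prod ha hb)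

theorem IsMaxChain.isClosed [OrderClosedTopology α] {s : Set α} (hs : IsMaxChain (· ≤ ·) s) :
    IsClosed s :=
  closure_eq_iff_isClosed.mp (hs.2 hs.1.closure subset_closure).symm

theorem IsChain.exists_isLeast_of_isCompact [ClosedIicTopology α] {s : Set α}
    (hc : IsChain (· ≤ ·) s) (hs : IsCompact s) (hne : s.Nonempty) : ∃ x, IsLeast s x := by
  have : Nonempty s := hne.to_subtype
  have hdir : Directed (· ⊇ ·) fun x : s => Iic (x : α) := fun x y =>
    (hc.total x.2 y.2).elim (fun h => ⟨x, subset_rfl, Iic_subset_Iic.mpr h⟩)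
      (fun h => ⟨y, Iic_subset_Iic.mpr h, subset_rfl⟩)
  by_contra! h
  obtain ⟨x, hx⟩ := hs.elim_directed_family_closed _ (fun _ => isClosed_Iic) (by
    refine eq_empty_iff_forall_notMem.mpr fun y ⟨hys, hy⟩ => h y ⟨hys, fun z hz => ?_⟩
    exact mem_iInter.mp hy ⟨z, hz⟩) hdir
  exact (eq_empty_iff_forall_notMem.mp hx) x ⟨x.2, le_rfl⟩

theorem IsChain.exists_isGreatest_of_isCompact [ClosedIciTopology α] {s : Set α}
    (hc : IsChain (· ≤ ·) s) (hs : IsCompact s) (hne : s.Nonempty) : ∃ x, IsGreatest s x :=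
  IsChain.exists_isLeast_of_isCompact (α := αᵒᵈ) hc.symm hs hne

end ChainTopology

theorem IsMaxChain.mem_of_forall_le_or_le {α : Type*} [LE α] {s : Set α} {a : α}
    (hs : IsMaxChain (· ≤ ·) s) (ha : ∀ b ∈ s, a ≤ b ∨ b ≤ a) : a ∈ s :=
  (hs.2 (hs.1.insert fun b hb _ => ha b hb) (subset_insert a s)).symm ▸ mem_insert a s

theorem IsMaxChain.eq_image_of_subset_range {α β : Type*} [Preorder α] [Preorder β]
    (e : α ↪o β) {c : Set α} (hc : IsMaxChain (· ≤ ·) c) {t : Set β}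
    (ht : IsChain (· ≤ ·) t) (hct : e '' c ⊆ t) (hte : t ⊆ range e) : t = e '' c := by
  rw [hc.2 (ht.preimage_embedding e) (image_subset_iff.mp hct), image_preimage_eq_of_subset hte]

namespace TopologicalSpace.NonemptyCompacts

section Order

variable {α : Type*} [TopologicalSpace α]

instance [T2Space α] : OrderClosedTopology (NonemptyCompacts α) where
  isClosed_le' := by
    refine isOpen_compl_iff.mp <| isOpen_iff_forall_mem_open.mpr fun ⟨A, B⟩ hAB => ?_
    obtain ⟨x, hxA, hxB⟩ := not_subset.mp hAB
    obtain ⟨U, O, hU, hO, hxU, hBO, hUO⟩ :=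
      SeparatedNhds.of_isCompact_isCompact isCompact_singleton B.isCompact
        (disjoint_singleton_left.mpr hxB)
    refine ⟨{K : NonemptyCompacts α | (↑K ∩ U).Nonempty} ×ˢ {K : NonemptyCompacts α | ↑K ⊆ O},
      ?_, (isOpen_inter_nonempty_of_isOpen hU).prod (isOpen_subsets_of_isOpen hO),
      ⟨⟨x, hxA, hxU rfl⟩, hBO⟩⟩
    rintro ⟨A', B'⟩ ⟨⟨z, hzA', hzU⟩, hB'O⟩ hle
    exact hUO.le_bot ⟨hzU, hB'O (hle hzA')⟩

theorem isClosed_setOf_isChain {β : Type*} [TopologicalSpace β] [Preorder β]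
    [OrderClosedTopology β] :
    IsClosed {C : NonemptyCompacts β | IsChain (· ≤ ·) (C : Set β)} := by
  have hR : IsClosed {p : β × β | p.1 ≤ p.2 ∨ p.2 ≤ p.1} :=
    (isClosed_le continuous_fst continuous_snd).union (isClosed_le continuous_snd continuous_fst)
  have hsq : Continuous fun C : NonemptyCompacts β => C ×ˢ C := by fun_prop
  convert (isClosed_subsets_of_isClosed hR).preimage hsq using 1
  ext C
  simp only [mem_ofPred_eq, mem_preimage, coe_prod, prod_subset_iff]
  exact ⟨fun h a ha b hb => h.total ha hb, fun h a ha b hb _ => h a ha b hb⟩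

end Order

section Action

variable {G X : Type*} [TopologicalSpace X]

instance [SMul G X] [ContinuousConstSMul G X] : SMul G (NonemptyCompacts X) :=
  ⟨fun g K => K.map (g • ·) (continuous_const_smul g)⟩

@[simp]
theorem coe_smul [SMul G X] [ContinuousConstSMul G X] (g : G) (K : NonemptyCompacts X) :
    ((g • K : NonemptyCompacts X) : Set X) = (g • ·) '' K :=
  rfl

instance [SMul G X] [ContinuousConstSMul G X] : ContinuousConstSMul G (NonemptyCompacts X) :=
  ⟨fun g => (continuous_const_smul g).nonemptyCompacts_map⟩

instance [Monoid G] [MulAction G X] [ContinuousConstSMul G X] :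
    MulAction G (NonemptyCompacts X) where
  one_smul K := SetLike.coe_injective (by simp)
  mul_smul g h K := SetLike.coe_injective (by simp [image_image, mul_smul])

instance [Monoid G] [TopologicalSpace G] [MulAction G X] [ContinuousSMul G X] :
    ContinuousSMul G (NonemptyCompacts X) where
  continuous_smul := by
    show Continuous fun p : G × NonemptyCompacts X => p.2.map (p.1 • ·) _
    fun_prop

def smulOrderIso [Group G] [MulAction G X] [ContinuousConstSMul G X] (g : G) :
    NonemptyCompacts X ≃o NonemptyCompacts X where
  toEquiv := MulAction.toPerm g
  map_rel_iff' {A B} := by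
    simp only [MulAction.toPerm_apply, ← SetLike.coe_subset_coe, coe_smul]
    exact image_subset_image_iff (MulAction.injective g)

end Action

section Straddles

variable {X : Type*} [TopologicalSpace X]

def meetsBoth (U V : Set X) : Set (NonemptyCompacts X) :=
  {A | ((A : Set X) ∩ U).Nonempty ∧ ((A : Set X) ∩ V).Nonempty}

/-- For small disjoint neighbourhoods `U`, `V` inside `L`, this is an open condition on `C`
witnessing a jump in the chain `C`. -/
def Straddles (U V L : Set X) (C : Set (NonemptyCompacts X)) : Prop :=
  (C ∩ meetsBoth U V).Nonempty ∧ C ⊆ {A | Disjoint (A : Set X) L} ∪ meetsBoth U V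

theorem isOpen_setOf_straddles {U V L : Set X} (hU : IsOpen U) (hV : IsOpen V)
    (hL : IsClosed L) :
    IsOpen {C : NonemptyCompacts (NonemptyCompacts X) | Straddles U V L C} := by
  have hM : IsOpen (meetsBoth U V) :=
    (isOpen_inter_nonempty_of_isOpen hU).inter (isOpen_inter_nonempty_of_isOpen hV)
  have hD : IsOpen {A : NonemptyCompacts X | Disjoint (A : Set X) L} := by
    simpa only [subset_compl_iff_disjoint_right] using isOpen_subsets_of_isOpen hL.isOpen_compl
  exact (isOpen_inter_nonempty_of_isOpen hM).inter (isOpen_subsets_of_isOpen (hD.union hM))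

theorem nonempty_biInter_inter_of_isChain [T2Space X] {D : Set (NonemptyCompacts X)}
    (hD : IsChain (· ≤ ·) D) (hne : D.Nonempty) {P : Set X} (hP : IsClosed P)
    (h : ∀ A ∈ D, ((A : Set X) ∩ P).Nonempty) : ((⋂ A ∈ D, (A : Set X)) ∩ P).Nonempty := by
  have : Nonempty D := hne.to_subtype
  have hdir : Directed (· ⊇ ·) fun A : D => (A : Set X) ∩ P := fun A B =>
    (hD.total A.2 B.2).elim (fun h => ⟨A, subset_rfl, inter_subset_inter_left _ h⟩)
      (fun h => ⟨B, inter_subset_inter_left _ h, subset_rfl⟩)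
  rw [biInter_eq_iInter, iInter_inter]
  exact IsCompact.nonempty_iInter_of_directed_nonempty_isCompact_isClosed _ hdir
    (fun A => h A A.2) (fun A => A.1.isCompact.inter_right hP)
    (fun A => A.1.isCompact.isClosed.inter hP)

end Straddles

section MaxChains

variable {X : Type*} [TopologicalSpace X] [CompactSpace X] [T2Space X]

theorem not_isMaxChain_of_straddles {U V L : Set X}
    (hUV : Disjoint (closure U) (closure V)) (hL : closure U ∪ closure V ⊆ interior L)
    {C : Set (NonemptyCompacts X)} (h : Straddles U V L C) : ¬ IsMaxChain (· ≤ ·) C := by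
  intro hC
  obtain ⟨hne, hcover⟩ := h
  have hmeets_L : ∀ A ∈ meetsBoth U V, ¬ Disjoint (A : Set X) L := fun A hA hdisj =>
    hA.1.not_disjoint (hdisj.mono_right
      (subset_closure.trans (subset_union_left.trans (hL.trans interior_subset))))
  set J := ⋂ A ∈ C ∩ meetsBoth U V, (A : Set X)
  have hchain := hC.1.mono (inter_subset_left (t := meetsBoth U V))
  obtain ⟨x, hxJ, hxU⟩ := nonempty_biInter_inter_of_isChain hchain hne isClosed_closure
    fun A hA => hA.2.1.mono (inter_subset_inter_right _ subset_closure)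
  obtain ⟨y, hyJ, hyV⟩ := nonempty_biInter_inter_of_isChain hchain hne isClosed_closure
    fun A hA => hA.2.2.mono (inter_subset_inter_right _ subset_closure)
  have hJ : IsClosed J := isClosed_biInter fun A _ => A.isCompact.isClosed
  -- `E` is inserted into the jump: it lies below `J` but contains a point of `closure U`.
  let E : NonemptyCompacts X :=
    ⟨⟨{x} ∪ J \ interior L, (isClosed_singleton.union (hJ.sdiff isOpen_interior)).isCompact⟩,
      ⟨x, Or.inl rfl⟩⟩
  have hE : E ∈ C := hC.mem_of_forall_le_or_le fun A hA => by
    rcases hcover hA with hdisj | hboth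
    · refine Or.inr fun z hz => Or.inr ⟨mem_iInter₂.mpr fun B hB => ?_,
        fun hzL => hdisj.notMem_of_mem_left hz (interior_subset hzL)⟩
      rcases hC.1.total hA hB.1 with hAB | hBA
      · exact hAB hz
      · exact absurd hdisj (hmeets_L A ⟨hB.2.1.mono (inter_subset_inter_left _ hBA),
          hB.2.2.mono (inter_subset_inter_left _ hBA)⟩)
    · exact Or.inl (union_subset (singleton_subset_iff.mpr (mem_iInter₂.mp hxJ A ⟨hA, hboth⟩))
        (sdiff_subset.trans (biInter_subset_of_mem ⟨hA, hboth⟩)))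
  have hEL : ¬ Disjoint (E : Set X) L :=
    not_disjoint_iff.mpr ⟨x, Or.inl rfl, interior_subset (hL (Or.inl hxU))⟩
  have hyE : y ∈ (E : Set X) := mem_iInter₂.mp hyJ E ⟨hE, (hcover hE).resolve_left hEL⟩
  rcases hyE with rfl | ⟨-, hyL⟩
  · exact hUV.notMem_of_mem_left hxU hyV
  · exact hyL (hL (Or.inr hyV))

theorem exists_gap_of_not_isMaxChain [Nonempty X] {C : Set (NonemptyCompacts X)}
    (hC : IsClosed C) (hc : IsChain (· ≤ ·) C) (htop : ⊤ ∈ C) (hmax : ¬ IsMaxChain (· ≤ ·) C) :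
    ∃ x y : X, x ≠ y ∧ ∃ F : Set X, IsClosed F ∧ x ∉ F ∧ y ∉ F ∧
      ∀ A ∈ C, (A : Set X) ⊆ F ∨ (x ∈ A ∧ y ∈ A) := by
  obtain ⟨E, hEC, hEcomp⟩ : ∃ E ∉ C, ∀ A ∈ C, A ≤ E ∨ E ≤ A := by
    obtain ⟨t, ht, hCt, hne⟩ : ∃ t, IsChain (· ≤ ·) t ∧ C ⊆ t ∧ C ≠ t := by
      simpa [IsMaxChain, hc] using hmax
    obtain ⟨E, hEt, hEC⟩ := not_subset.mp fun htC => hne (hCt.antisymm htC)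
    exact ⟨E, hEC, fun A hA => ht (hCt hA) hEt (ne_of_mem_of_not_mem hA hEC)⟩
  obtain ⟨I, ⟨hIC, hEI⟩, hI⟩ :=
    IsChain.exists_isLeast_of_isCompact (hc.mono (inter_subset_left (t := Ici E)))
      (hC.inter isClosed_Ici).isCompact ⟨⊤, htop, (le_top : E ≤ ⊤)⟩
  obtain ⟨F, hFcl, hFE, hEF, hF⟩ : ∃ F : Set X, IsClosed F ∧ F ⊆ E ∧ ¬ (E : Set X) ⊆ F ∧
      ∀ A ∈ C, A ≤ E → (A : Set X) ⊆ F := by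
    rcases (C ∩ Iic E).eq_empty_or_nonempty with h | h
    · exact ⟨∅, isClosed_empty, empty_subset _,
        fun hE => E.nonempty.ne_empty (subset_empty_iff.mp hE),
        fun A hA hAE => (h.subset ⟨hA, hAE⟩).elim⟩
    obtain ⟨D, ⟨hDC, hDE⟩, hD⟩ := IsChain.exists_isGreatest_of_isCompact
      (hc.mono inter_subset_left) (hC.inter isClosed_Iic).isCompact h
    exact ⟨D, D.isCompact.isClosed, hDE,
      fun hED => hEC (le_antisymm (α := NonemptyCompacts X) hDE hED ▸ hDC),
      fun A hA hAE => hD ⟨hA, hAE⟩⟩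
  obtain ⟨x, hxE, hxF⟩ := not_subset.mp hEF
  obtain ⟨y, hyI, hyE⟩ := not_subset.mp fun hIE : (I : Set X) ⊆ E =>
    hEC (le_antisymm (α := NonemptyCompacts X) hIE hEI ▸ hIC)
  refine ⟨x, y, ne_of_mem_of_not_mem hxE hyE, F, hFcl, hxF, fun hyF => hyE (hFE hyF),
    fun A hA => ?_⟩
  rcases hEcomp A hA with hAE | hEA
  · exact Or.inl (hF A hA hAE)
  · exact Or.inr ⟨hEA hxE, hI ⟨hA, hEA⟩ hyI⟩

theorem exists_straddles_of_gap {C : Set (NonemptyCompacts X)} {x y : X} (hxy : x ≠ y)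
    {F : Set X} (hF : IsClosed F) (hxF : x ∉ F) (hyF : y ∉ F)
    (hgap : ∀ A ∈ C, (A : Set X) ⊆ F ∨ (x ∈ A ∧ y ∈ A)) (hxyC : ∃ A ∈ C, x ∈ A ∧ y ∈ A) :
    ∃ U V L : Set X, IsOpen U ∧ IsOpen V ∧ IsClosed L ∧ Disjoint (closure U) (closure V) ∧
      closure U ∪ closure V ⊆ interior L ∧ Straddles U V L C := by
  obtain ⟨W, hW, hxyW, hWF⟩ := normal_exists_closure_subset
    (isClosed_singleton.union isClosed_singleton : IsClosed ({x} ∪ {y})) hF.isOpen_compl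
    (by simp [insert_subset_iff, hxF, hyF])
  obtain ⟨U₀, V₀, hU₀, hV₀, hxU₀, hyV₀, hUV₀⟩ := t2_separation hxy
  obtain ⟨U, hU, hxU, hUW⟩ := normal_exists_closure_subset isClosed_singleton (hU₀.inter hW)
    (singleton_subset_iff.mpr ⟨hxU₀, hxyW (Or.inl rfl)⟩)
  obtain ⟨V, hV, hyV, hVW⟩ := normal_exists_closure_subset isClosed_singleton (hV₀.inter hW)
    (singleton_subset_iff.mpr ⟨hyV₀, hxyW (Or.inr rfl)⟩)
  have hmeets : ∀ A : NonemptyCompacts X, x ∈ A ∧ y ∈ A → A ∈ meetsBoth U V := fun A hA =>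
    ⟨⟨x, hA.1, hxU rfl⟩, ⟨y, hA.2, hyV rfl⟩⟩
  refine ⟨U, V, closure W, hU, hV, isClosed_closure,
    hUV₀.mono (hUW.trans inter_subset_left) (hVW.trans inter_subset_left),
    union_subset ((hUW.trans inter_subset_right).trans hW.subset_interior_closure)
      ((hVW.trans inter_subset_right).trans hW.subset_interior_closure), ?_, fun A hA => ?_⟩
  · obtain ⟨A, hA, hxyA⟩ := hxyC
    exact ⟨A, hA, hmeets A hxyA⟩
  · rcases hgap A hA with hAF | hxyA
    · exact Or.inl (subset_compl_iff_disjoint_right.mp (hAF.trans (subset_compl_comm.mp hWF)))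
    · exact Or.inr (hmeets A hxyA)

theorem isClosed_setOf_isMaxChain [Nonempty X] :
    IsClosed {C : NonemptyCompacts (NonemptyCompacts X) |
      IsMaxChain (· ≤ ·) (C : Set (NonemptyCompacts X))} := by
  refine isOpen_compl_iff.mp <| isOpen_iff_forall_mem_open.mpr fun C hC => ?_
  by_cases hc : IsChain (· ≤ ·) (C : Set (NonemptyCompacts X))
  · by_cases htop : ⊤ ∈ C
    · obtain ⟨x, y, hxy, F, hF, hxF, hyF, hgap⟩ :=
        exists_gap_of_not_isMaxChain C.isCompact.isClosed hc htop hC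
      obtain ⟨U, V, L, hU, hV, hL, hUV, hUVL, hCs⟩ :=
        exists_straddles_of_gap hxy hF hxF hyF hgap ⟨⊤, htop, trivial, trivial⟩
      exact ⟨_, fun C' hC' => not_isMaxChain_of_straddles hUV hUVL hC',
        isOpen_setOf_straddles hU hV hL, hCs⟩
    · have htop_closed : IsClosed {C : NonemptyCompacts (NonemptyCompacts X) | ⊤ ∈ C} := by
        simpa only [inter_singleton_nonempty, SetLike.mem_coe] using
          isClosed_inter_nonempty_of_isClosed (isClosed_singleton (x := (⊤ : NonemptyCompacts X)))
      exact ⟨{C' | ⊤ ∈ C'}ᶜ, fun C' hC' hmax => hC' hmax.top_mem, htop_closed.isOpen_compl, htop⟩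
  · exact ⟨{C' | IsChain (· ≤ ·) (C' : Set (NonemptyCompacts X))}ᶜ, fun C' hC' hmax => hC' hmax.1,
      isClosed_setOf_isChain.isOpen_compl, hc⟩

theorem exists_isMaxChain [Nonempty X] :
    ∃ C : NonemptyCompacts (NonemptyCompacts X),
      IsMaxChain (· ≤ ·) (C : Set (NonemptyCompacts X)) := by
  obtain ⟨S, hS, -⟩ :=
    (IsChain.empty : IsChain (· ≤ ·) (∅ : Set (NonemptyCompacts X))).exists_maxChain
  exact ⟨⟨⟨S, hS.isClosed.isCompact⟩, ⟨⊤, hS.top_mem⟩⟩, hS⟩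

theorem maximal_isChain_image_coe {C : Set (NonemptyCompacts X)} (hC : IsMaxChain (· ≤ ·) C) :
    (∀ F ∈ SetLike.coe '' C, F.Nonempty ∧ IsClosed F) ∧ IsChain (· ⊆ ·) (SetLike.coe '' C) ∧
      ∀ C' : Set (Set X), (∀ F ∈ C', F.Nonempty ∧ IsClosed F) → IsChain (· ⊆ ·) C' →
        SetLike.coe '' C ⊆ C' → C' = SetLike.coe '' C := by
  let e : NonemptyCompacts X ↪o Set X := OrderEmbedding.ofMapLEIff (↑) fun _ _ => Iff.rfl
  refine ⟨?_, hC.1.image e, fun C' hC' hchain hsub => hC.eq_image_of_subset_range e hchain hsub ?_⟩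
  · rintro _ ⟨A, -, rfl⟩
    exact ⟨A.nonempty, A.isCompact.isClosed⟩
  · intro F hF
    exact ⟨⟨⟨F, (hC' F hF).2.isCompact⟩, (hC' F hF).1⟩, rfl⟩

end MaxChains

section MaxChainSpace

variable (G X : Type*) [Group G] [TopologicalSpace X] [MulAction G X] [ContinuousConstSMul G X]

def maxChains : SubMulAction G (NonemptyCompacts (NonemptyCompacts X)) where
  carrier := {C | IsMaxChain (· ≤ ·) (C : Set (NonemptyCompacts X))}
  smul_mem' g _ hC := hC.image (smulOrderIso g)

variable [CompactSpace X] [T2Space X] [Nonempty X]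

instance : CompactSpace (maxChains G X) :=
  isCompact_iff_compactSpace.mp (isClosed_setOf_isMaxChain (X := X)).isCompact

instance : Nonempty (maxChains G X) :=
  let ⟨C, hC⟩ := exists_isMaxChain (X := X)
  ⟨⟨C, hC⟩⟩

end MaxChainSpace

end TopologicalSpace.NonemptyCompacts

theorem statement2_general (G : Type u) [Group G] [TopologicalSpace G]
    (M : Type v) [TopologicalSpace M] [CompactSpace M] [T2Space M] [Nonempty M]
    [MulAction G M] [ContinuousSMul G M]
    (huniv : ∀ (Y : Type v) [TopologicalSpace Y] [CompactSpace Y] [T2Space Y]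
      [MulAction G Y] [ContinuousSMul G Y], Nonempty Y →
      ∃ f : M → Y, Continuous f ∧ ∀ (g : G) (x : M), f (g • x) = g • f x)
    (p : M) :
    ∃ C : Set (Set M),
      (∀ F ∈ C, F.Nonempty ∧ IsClosed F) ∧
      IsChain (· ⊆ ·) C ∧
      (∀ C' : Set (Set M), (∀ F ∈ C', F.Nonempty ∧ IsClosed F) →
        IsChain (· ⊆ ·) C' → C ⊆ C' → C' = C) ∧
      (∀ F ∈ C, ∀ g : G, g • p = p → (fun x => g • x) '' F ∈ C) := by
  obtain ⟨f, -, hf⟩ := huniv (NonemptyCompacts.maxChains G M) inferInstance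
  have hfix : ∀ g : G, g • p = p →
      g • (f p : NonemptyCompacts (NonemptyCompacts M)) = f p := fun g hg =>
    congrArg Subtype.val (show g • f p = f p by rw [← hf, hg])
  obtain ⟨hclosed, hchain, hmax⟩ := NonemptyCompacts.maximal_isChain_image_coe (f p).2
  refine ⟨_, hclosed, hchain, hmax, ?_⟩
  rintro _ ⟨A, hA, rfl⟩ g hg
  refine ⟨g • A, ?_, rfl⟩
  rw [← hfix g hg]
  exact mem_image_of_mem _ hA

/-- If `M` is a universal minimal compact `G`-space, `p ∈ M` and `H` is the stabilizer of `p`,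
then there exists an `H`-invariant maximal chain of nonempty closed subsets of `M`. -/
theorem statement2 (G : Type u) [Group G] [TopologicalSpace G] [IsTopologicalGroup G]
    (M : Type v) [TopologicalSpace M] [CompactSpace M] [T2Space M] [Nonempty M]
    [MulAction G M] [ContinuousSMul G M]
    (hmin : ∀ A : Set M, A.Nonempty → IsClosed A →
      (∀ (g : G), ∀ x ∈ A, g • x ∈ A) → A = Set.univ)
    (huniv : ∀ (Y : Type v) [TopologicalSpace Y] [CompactSpace Y] [T2Space Y]
      [MulAction G Y] [ContinuousSMul G Y], Nonempty Y →
      ∃ f : M → Y, Continuous f ∧ ∀ (g : G) (x : M), f (g • x) = g • f x)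
    (p : M) :
    ∃ C : Set (Set M),
      (∀ F ∈ C, F.Nonempty ∧ IsClosed F) ∧
      IsChain (· ⊆ ·) C ∧
      (∀ C' : Set (Set M), (∀ F ∈ C', F.Nonempty ∧ IsClosed F) →
        IsChain (· ⊆ ·) C' → C ⊆ C' → C' = C) ∧
      (∀ F ∈ C, ∀ g : G, g • p = p → (fun x => g • x) '' F ∈ C) :=
  statement2_general G M huniv p
end

section
/- Let G be a topological group, let (X, e) be a greatest ambit for G, and for each y ∈ X let r_y : X → X denote the unique G-map with r_y(e) = y. Let M be a nonempty closed G-invariant subset of X that is minimal (has no proper nonempty closed G-invariant subset). Then every G-map f : M → M has the form f = r_y restricted to M for some y ∈ M; that is, there exists y ∈ M such that f(x) = r_y(x) for all x ∈ M. -/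
/-!
Composition of the right translations `r_y` makes the greatest ambit `X` a compact right
topological semigroup (`x * y := r_y x`), and by density of the orbit of `e` the map `r_y`
sends `X` into every closed invariant set containing `y`. By the Ellis–Numakura lemma the
minimal set `M` contains an idempotent `u`; minimality forces `r_u X = M`, so `r_u` fixes `M`
pointwise. Then `f ∘ r_u` is a `G`-map `X → X`, hence equals `r_y` for `y = f (r_u e) ∈ M`,
and it agrees with `f` on `M`.
-/

universe u v

instance SubMulAction.continuousSMul {G X : Type*} [TopologicalSpace G] [TopologicalSpace X]
    [SMul G X] [ContinuousSMul G X] (p : SubMulAction G X) :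
    ContinuousSMul G p :=
  ⟨(continuous_fst.smul (continuous_subtype_val.comp continuous_snd)).subtype_mk _⟩

section GreatestAmbit

variable {G : Type u} [Monoid G] [TopologicalSpace G] {X : Type v} [TopologicalSpace X]
  [MulAction G X]

variable (G) in
def IsGreatestAmbit [CompactSpace X] [T2Space X] [ContinuousSMul G X] (e : X) : Prop :=
  ∀ (Y : Type v) [TopologicalSpace Y] [CompactSpace Y] [T2Space Y]
    [MulAction G Y] [ContinuousSMul G Y] (y : Y),
    ∃! f : X → Y, Continuous f ∧ (∀ (g : G) (x : X), f (g • x) = g • f x) ∧ f e = y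

variable [CompactSpace X] [T2Space X] [ContinuousSMul G X] {e : X}

theorem IsGreatestAmbit.ext {Y : Type v} [TopologicalSpace Y] [CompactSpace Y] [T2Space Y]
    [MulAction G Y] [ContinuousSMul G Y] (hX : IsGreatestAmbit G e) {h₁ h₂ : X → Y}
    (hc₁ : Continuous h₁) (hs₁ : ∀ (g : G) (x : X), h₁ (g • x) = g • h₁ x)
    (hc₂ : Continuous h₂) (hs₂ : ∀ (g : G) (x : X), h₂ (g • x) = g • h₂ x)
    (he : h₁ e = h₂ e) : h₁ = h₂ :=
  (hX Y (h₂ e)).unique ⟨hc₁, hs₁, he⟩ ⟨hc₂, hs₂, rfl⟩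

/-- The closure of the orbit of `e` is itself an ambit, and its universal map, read back in `X`,
is a `G`-map fixing `e`, hence the identity. -/
theorem IsGreatestAmbit.dense_orbit (hX : IsGreatestAmbit G e) :
    Dense (MulAction.orbit G e) := by
  let C : SubMulAction G X :=
    { carrier := closure (MulAction.orbit G e)
      smul_mem' := fun g _ hx => smul_closure_orbit_subset g e (Set.smul_mem_smul_set hx) }
  have : CompactSpace C := isCompact_iff_compactSpace.mp isClosed_closure.isCompact
  obtain ⟨φ, ⟨hφc, hφs, hφe⟩, -⟩ :=
    hX C ⟨e, subset_closure (MulAction.mem_orbit_self e)⟩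
  have hφ : Subtype.val ∘ φ = id :=
    hX.ext (continuous_subtype_val.comp hφc) (fun g x => congrArg Subtype.val (hφs g x))
      continuous_id (fun _ _ => rfl) (congrArg Subtype.val hφe)
  intro x
  have hx : (φ x : X) = x := congrFun hφ x
  exact hx ▸ (φ x).2

theorem IsGreatestAmbit.apply_mem_of_isClosed {Y : Type*} [TopologicalSpace Y] [MulAction G Y]
    (hX : IsGreatestAmbit G e) {h : X → Y} (hc : Continuous h)
    (hs : ∀ (g : G) (x : X), h (g • x) = g • h x) {S : Set Y} (hS : IsClosed S)
    (hSinv : ∀ (g : G), ∀ y ∈ S, g • y ∈ S) (he : h e ∈ S) (x : X) : h x ∈ S := by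
  have horbit : MulAction.orbit G e ⊆ h ⁻¹' S := by
    rintro _ ⟨g, rfl⟩
    simpa only [Set.mem_preimage, hs] using hSinv g _ he
  exact closure_minimal horbit (hS.preimage hc) (hX.dense_orbit x)

variable (G) in
def IsTranslationFamily (e : X) (r : X → X → X) : Prop :=
  ∀ y : X, Continuous (r y) ∧ (∀ (g : G) (x : X), r y (g • x) = g • r y x) ∧ r y e = y

variable {r : X → X → X}

theorem IsGreatestAmbit.translation_comp (hX : IsGreatestAmbit G e)
    (hr : IsTranslationFamily G e r) (y z : X) : r z ∘ r y = r (r z y) :=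
  hX.ext ((hr z).1.comp (hr y).1)
    (fun g x => by simp only [Function.comp_apply, (hr y).2.1, (hr z).2.1])
    (hr (r z y)).1 (hr (r z y)).2.1 (by simp only [Function.comp_apply, (hr y).2.2, (hr _).2.2])

theorem IsGreatestAmbit.translation_mem (hX : IsGreatestAmbit G e)
    (hr : IsTranslationFamily G e r) {S : Set X} (hS : IsClosed S)
    (hSinv : ∀ (g : G), ∀ y ∈ S, g • y ∈ S) {y : X} (hy : y ∈ S) (x : X) : r y x ∈ S :=
  hX.apply_mem_of_isClosed (hr y).1 (hr y).2.1 hS hSinv (by rwa [(hr y).2.2]) x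

/-- Ellis–Numakura for the right topological semigroup structure `x * y := r y x`. -/
theorem IsGreatestAmbit.exists_translation_idempotent (hX : IsGreatestAmbit G e)
    (hr : IsTranslationFamily G e r) {M : Set X} (hMne : M.Nonempty) (hMc : IsClosed M)
    (hMinv : ∀ (g : G), ∀ x ∈ M, g • x ∈ M) : ∃ u ∈ M, r u u = u := by
  let _ : Semigroup X :=
    { mul := fun x y => r y x
      mul_assoc := fun x y z => congrFun (hX.translation_comp hr y z) x }
  exact exists_idempotent_in_compact_subsemigroup (fun y => (hr y).1) M hMne hMc.isCompact
    (fun x _ y hy => hX.translation_mem hr hMc hMinv hy x)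

theorem IsGreatestAmbit.translation_idempotent_apply_of_minimal (hX : IsGreatestAmbit G e)
    (hr : IsTranslationFamily G e r) {M : Set X} (hMc : IsClosed M)
    (hMinv : ∀ (g : G), ∀ x ∈ M, g • x ∈ M)
    (hMmin : ∀ Z : Set X, Z ⊆ M → Z.Nonempty → IsClosed Z →
      (∀ (g : G), ∀ x ∈ Z, g • x ∈ Z) → Z = M)
    {u : X} (huM : u ∈ M) (huu : r u u = u) {p : X} (hp : p ∈ M) : r u p = p := by
  have hrange : Set.range (r u) = M := by
    refine hMmin _ ?_ ⟨u, e, (hr u).2.2⟩ (isCompact_range (hr u).1).isClosed ?_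
    · rintro _ ⟨x, rfl⟩
      exact hX.translation_mem hr hMc hMinv huM x
    · rintro g _ ⟨x, rfl⟩
      exact ⟨g • x, (hr u).2.1 g x⟩
  obtain ⟨x, rfl⟩ := hrange ▸ hp
  rw [← Function.comp_apply (f := r u), hX.translation_comp hr, huu]

end GreatestAmbit

theorem statement14_general (G : Type u) [Group G] [TopologicalSpace G]
    (X : Type v) [TopologicalSpace X] [CompactSpace X] [T2Space X]
    [MulAction G X] [ContinuousSMul G X] (e : X)
    (hambit : ∀ (Y : Type v) [TopologicalSpace Y] [CompactSpace Y] [T2Space Y]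
      [MulAction G Y] [ContinuousSMul G Y] (y : Y),
      ∃! f : X → Y, Continuous f ∧ (∀ (g : G) (x : X), f (g • x) = g • f x) ∧ f e = y)
    (r : X → X → X)
    (hr : ∀ y : X, Continuous (r y) ∧
      (∀ (g : G) (x : X), r y (g • x) = g • r y x) ∧ r y e = y)
    (M : Set X) (hMne : M.Nonempty) (hMc : IsClosed M)
    (hMinv : ∀ (g : G), ∀ x ∈ M, g • x ∈ M)
    (hMmin : ∀ Z : Set X, Z ⊆ M → Z.Nonempty → IsClosed Z →
      (∀ (g : G), ∀ x ∈ Z, g • x ∈ Z) → Z = M)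
    (f : M → M) (hfc : Continuous f)
    (hfe : ∀ (g : G) (x : M), f ⟨g • (x : X), hMinv g x x.2⟩ = ⟨g • (f x : X), hMinv g _ (f x).2⟩) :
    ∃ y ∈ M, ∀ x : M, (f x : X) = r y (x : X) := by
  have hX : IsGreatestAmbit G e := hambit
  obtain ⟨u, huM, huu⟩ := hX.exists_translation_idempotent hr hMne hMc hMinv
  let ru : X → M := fun x => ⟨r u x, hX.translation_mem hr hMc hMinv huM x⟩
  have hru_smul (g : G) (x : X) : ru (g • x) = ⟨g • (ru x : X), hMinv g _ (ru x).2⟩ :=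
    Subtype.ext ((hr u).2.1 g x)
  have hru_of_mem (x : M) : ru x = x :=
    Subtype.ext (hX.translation_idempotent_apply_of_minimal hr hMc hMinv hMmin huM huu x.2)
  let h : X → X := fun x => f (ru x)
  have hh : h = r (h e) :=
    hX.ext (continuous_subtype_val.comp (hfc.comp ((hr u).1.subtype_mk _)))
      (fun g x => by simp only [h, hru_smul, hfe]) (hr _).1 (hr _).2.1 (hr _).2.2.symm
  refine ⟨h e, (f _).2, fun x => ?_⟩
  rw [← hh]
  simp only [h, hru_of_mem]

/-- Every `G`-self-map of a minimal closed `G`-invariant subset `M` of the greatest ambit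
`(X, e)` is the restriction of a right translation `r_y` with `y ∈ M`. -/
theorem statement14 (G : Type u) [Group G] [TopologicalSpace G] [IsTopologicalGroup G]
    (X : Type v) [TopologicalSpace X] [CompactSpace X] [T2Space X] [Nonempty X]
    [MulAction G X] [ContinuousSMul G X] (e : X)
    (hambit : ∀ (Y : Type v) [TopologicalSpace Y] [CompactSpace Y] [T2Space Y]
      [MulAction G Y] [ContinuousSMul G Y] (y : Y),
      ∃! f : X → Y, Continuous f ∧ (∀ (g : G) (x : X), f (g • x) = g • f x) ∧ f e = y)
    (r : X → X → X)
    (hr : ∀ y : X, Continuous (r y) ∧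
      (∀ (g : G) (x : X), r y (g • x) = g • r y x) ∧ r y e = y)
    (M : Set X) (hMne : M.Nonempty) (hMc : IsClosed M)
    (hMinv : ∀ (g : G), ∀ x ∈ M, g • x ∈ M)
    (hMmin : ∀ Z : Set X, Z ⊆ M → Z.Nonempty → IsClosed Z →
      (∀ (g : G), ∀ x ∈ Z, g • x ∈ Z) → Z = M)
    (f : M → M) (hfc : Continuous f)
    (hfe : ∀ (g : G) (x : M), f ⟨g • (x : X), hMinv g x x.2⟩ = ⟨g • (f x : X), hMinv g _ (f x).2⟩) :
    ∃ y ∈ M, ∀ x : M, (f x : X) = r y (x : X) :=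
  statement14_general G X e hambit r hr M hMne hMc hMinv hMmin f hfc hfe
end
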